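/- arXiv:2105.09718 — 2 statements merged into one kernel-verified Lean document; each statement's English description precedes it below -/
import Mathlib

section
/- Let B, C ∈ B(H). Then w([[0, B], [C, 0]]) ≥ (1/2)·max{‖B‖, ‖C‖} + (1/4)·| ‖B + C*‖ − ‖B − C*‖ |. -/
/-! For `T = [[0, B], [C, 0]]` and a scalar `c`, the operator `c T + (c T)*` is self-adjoint with
quadratic form `2 Re ⟨c T x, x⟩`, so its norm is at most `2 |c| w(T)`; its upper right corner is
`c B + (c C)*`. Taking `c = 1` and `c = i` gives `‖B + C*‖, ‖B - C*‖ ≤ 2 w(T)`. Finally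
`2 max(‖B‖, ‖C‖) ≤ ‖B + C*‖ + ‖B - C*‖`, so the left-hand side is at most
`max(‖B + C*‖, ‖B - C*‖) / 2`. -/

open ContinuousLinearMap

variable {H : Type*} [NormedAddCommGroup H] [InnerProductSpace ℂ H] [CompleteSpace H]

/-- The numerical radius of a bounded linear operator:
`w(T) = sup { |⟨Tx, x⟩| : ‖x‖ = 1 }`. -/
noncomputable def numRadius {E : Type*} [NormedAddCommGroup E] [InnerProductSpace ℂ E]
    (T : E →L[ℂ] E) : ℝ :=
  sSup {r : ℝ | ∃ x : E, ‖x‖ = 1 ∧ r = ‖(inner ℂ (T x) x : ℂ)‖}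

/-- The absolute value `|T| = (T*T)^(1/2)` of a bounded linear operator.
Note `opAbs (adjoint T) = (T T*)^(1/2) = |T*|`. -/
noncomputable def opAbs (T : H →L[ℂ] H) : H →L[ℂ] H := CFC.sqrt (adjoint T * T)

/-- The off-diagonal operator matrix `[[0, B], [C, 0]]` acting on `H ⊕ H`
(with the Hilbert space structure `WithLp 2 (H × H)`) by `(x₁, x₂) ↦ (B x₂, C x₁)`. -/
noncomputable def offDiag (B C : H →L[ℂ] H) :
    WithLp 2 (H × H) →L[ℂ] WithLp 2 (H × H) :=
  ((WithLp.prodContinuousLinearEquiv 2 ℂ H H).symm : (H × H) →L[ℂ] WithLp 2 (H × H)).comp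
    (((B.comp (ContinuousLinearMap.snd ℂ H H)).prod
        (C.comp (ContinuousLinearMap.fst ℂ H H))).comp
      ((WithLp.prodContinuousLinearEquiv 2 ℂ H H) : WithLp 2 (H × H) →L[ℂ] H × H))

theorem two_mul_norm_le_norm_add_add_norm_sub {F : Type*} [SeminormedAddCommGroup F]
    [NormedSpace ℝ F] (x y : F) : 2 * ‖x‖ ≤ ‖x + y‖ + ‖x - y‖ :=
  calc 2 * ‖x‖ = ‖(2 : ℝ) • x‖ := by rw [norm_smul, Real.norm_two]
    _ = ‖(x + y) + (x - y)‖ := by rw [two_smul, add_add_sub_cancel]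
    _ ≤ ‖x + y‖ + ‖x - y‖ := norm_add_le _ _

theorem ContinuousLinearMap.opNorm_le_of_abs_re_inner_self_le {𝕜 E : Type*} [RCLike 𝕜]
    [NormedAddCommGroup E] [InnerProductSpace 𝕜 E] {S : E →L[𝕜] E}
    (hS : (S : E →ₗ[𝕜] E).IsSymmetric) {M : ℝ} (hM : 0 ≤ M)
    (h : ∀ x, |RCLike.re (inner 𝕜 (S x) x)| ≤ M * ‖x‖ ^ 2) : ‖S‖ ≤ M := by
  rw [S.norm_eq_iSup_rayleighQuotient hS]
  refine ciSup_le fun x => ?_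
  rcases eq_or_ne x 0 with rfl | hx
  · simpa using hM
  · rw [rayleighQuotient, reApplyInnerSelf_apply, abs_div, abs_sq,
      div_le_iff₀ (by positivity)]
    exact h x

section NumRadius

variable {E : Type*} [NormedAddCommGroup E] [InnerProductSpace ℂ E]

theorem numRadius_nonneg (T : E →L[ℂ] E) : 0 ≤ numRadius T :=
  Real.sSup_nonneg fun _ ⟨_, _, hr⟩ => hr ▸ norm_nonneg _

theorem bddAbove_numRadius_set (T : E →L[ℂ] E) :
    BddAbove {r : ℝ | ∃ x : E, ‖x‖ = 1 ∧ r = ‖(inner ℂ (T x) x : ℂ)‖} := by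
  refine ⟨‖T‖, ?_⟩
  rintro _ ⟨x, hx, rfl⟩
  calc ‖(inner ℂ (T x) x : ℂ)‖ ≤ ‖T x‖ * ‖x‖ := norm_inner_le_norm _ _
    _ ≤ ‖T‖ * ‖x‖ * ‖x‖ := by gcongr; exact T.le_opNorm x
    _ = ‖T‖ := by rw [hx, mul_one, mul_one]

theorem norm_inner_apply_self_le_numRadius (T : E →L[ℂ] E) {x : E} (hx : ‖x‖ = 1) :
    ‖(inner ℂ (T x) x : ℂ)‖ ≤ numRadius T :=
  le_csSup (bddAbove_numRadius_set T) ⟨x, hx, rfl⟩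

theorem norm_inner_apply_self_le_numRadius_mul_sq (T : E →L[ℂ] E) (x : E) :
    ‖(inner ℂ (T x) x : ℂ)‖ ≤ numRadius T * ‖x‖ ^ 2 := by
  rcases eq_or_ne x 0 with rfl | hx
  · simp
  have hx' : ‖x‖ ≠ 0 := norm_ne_zero_iff.mpr hx
  set u : E := ((‖x‖⁻¹ : ℝ) : ℂ) • x
  have hu : ‖u‖ = 1 := by simp [u, norm_smul, hx']
  have hxu : x = ((‖x‖ : ℝ) : ℂ) • u := by simp [u, smul_smul, hx']
  calc ‖(inner ℂ (T x) x : ℂ)‖ = ‖(inner ℂ (T u) u : ℂ)‖ * ‖x‖ ^ 2 := by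
        conv_lhs => rw [hxu]
        rw [map_smul, inner_smul_left, inner_smul_right, norm_mul, norm_mul, RCLike.norm_conj,
          Complex.norm_real, norm_norm]
        ring
    _ ≤ numRadius T * ‖x‖ ^ 2 := by gcongr; exact norm_inner_apply_self_le_numRadius T hu

theorem norm_smul_add_adjoint_smul_le [CompleteSpace E] (c : ℂ) (T : E →L[ℂ] E) :
    ‖c • T + adjoint (c • T)‖ ≤ 2 * (‖c‖ * numRadius T) := by
  have hS : IsSelfAdjoint (c • T + adjoint (c • T)) := by
    simpa only [star_eq_adjoint] using IsSelfAdjoint.add_star_self (c • T)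
  refine opNorm_le_of_abs_re_inner_self_le hS.isSymmetric
    (by positivity [numRadius_nonneg T]) fun x => ?_
  calc |RCLike.re (inner ℂ ((c • T + adjoint (c • T)) x) x)|
      = 2 * |RCLike.re (inner ℂ ((c • T) x) x)| := by
        rw [add_apply, inner_add_left, adjoint_inner_left, map_add, inner_re_symm x, ← two_mul,
          abs_mul, abs_two]
    _ ≤ 2 * ‖(inner ℂ ((c • T) x) x : ℂ)‖ := by gcongr; exact RCLike.abs_re_le_norm _
    _ = 2 * (‖c‖ * ‖(inner ℂ (T x) x : ℂ)‖) := by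
        rw [smul_apply, inner_smul_left, norm_mul, RCLike.norm_conj]
    _ ≤ 2 * (‖c‖ * (numRadius T * ‖x‖ ^ 2)) := by
        gcongr; exact norm_inner_apply_self_le_numRadius_mul_sq T x
    _ = 2 * (‖c‖ * numRadius T) * ‖x‖ ^ 2 := by ring

end NumRadius

section OffDiag

variable {V : Type*} [NormedAddCommGroup V] [InnerProductSpace ℂ V]

theorem offDiag_apply (B C : V →L[ℂ] V) (z : WithLp 2 (V × V)) :
    offDiag B C z = WithLp.toLp 2 (B z.snd, C z.fst) := rfl

theorem adjoint_offDiag [CompleteSpace V] (B C : V →L[ℂ] V) :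
    adjoint (offDiag B C) = offDiag (adjoint C) (adjoint B) := by
  refine ((eq_adjoint_iff _ _).mpr fun x y => ?_).symm
  simp only [offDiag_apply, WithLp.prod_inner_apply, adjoint_inner_left, WithLp.ofLp_fst,
    WithLp.ofLp_snd, add_comm]

theorem offDiag_add (B C B' C' : V →L[ℂ] V) :
    offDiag B C + offDiag B' C' = offDiag (B + B') (C + C') := rfl

theorem smul_offDiag (c : ℂ) (B C : V →L[ℂ] V) :
    c • offDiag B C = offDiag (c • B) (c • C) := rfl

theorem norm_le_norm_offDiag (B C : V →L[ℂ] V) : ‖B‖ ≤ ‖offDiag B C‖ := by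
  refine B.opNorm_le_bound (opNorm_nonneg _) fun u => ?_
  calc ‖B u‖ = ‖offDiag B C (WithLp.toLp 2 (0, u))‖ := by simp [offDiag_apply]
    _ ≤ ‖offDiag B C‖ * ‖WithLp.toLp 2 ((0 : V), u)‖ := le_opNorm _ _
    _ = ‖offDiag B C‖ * ‖u‖ := by rw [WithLp.norm_toLp_snd]

theorem norm_smul_add_adjoint_smul_le_numRadius_offDiag [CompleteSpace V] (c : ℂ)
    (B C : V →L[ℂ] V) :
    ‖c • B + adjoint (c • C)‖ ≤ 2 * (‖c‖ * numRadius (offDiag B C)) :=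
  calc ‖c • B + adjoint (c • C)‖
      ≤ ‖offDiag (c • B + adjoint (c • C)) (c • C + adjoint (c • B))‖ :=
        norm_le_norm_offDiag _ _
    _ = ‖c • offDiag B C + adjoint (c • offDiag B C)‖ := by
        rw [smul_offDiag, adjoint_offDiag, offDiag_add]
    _ ≤ 2 * (‖c‖ * numRadius (offDiag B C)) := norm_smul_add_adjoint_smul_le c _

end OffDiag

theorem stmt_2 (B C : H →L[ℂ] H) :
    (1 / 2) * max ‖B‖ ‖C‖ + (1 / 4) * |‖B + adjoint C‖ - ‖B - adjoint C‖| ≤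
      numRadius (offDiag B C) := by
  have h_add : ‖B + adjoint C‖ ≤ 2 * numRadius (offDiag B C) := by
    simpa using norm_smul_add_adjoint_smul_le_numRadius_offDiag 1 B C
  have h_sub : ‖B - adjoint C‖ ≤ 2 * numRadius (offDiag B C) := by
    have h := norm_smul_add_adjoint_smul_le_numRadius_offDiag Complex.I B C
    rwa [map_smulₛₗ, Complex.conj_I, neg_smul, ← sub_eq_add_neg, ← smul_sub, norm_smul,
      Complex.norm_I, one_mul, one_mul] at h
  have hB := two_mul_norm_le_norm_add_add_norm_sub B (adjoint C)
  have hC := two_mul_norm_le_norm_add_add_norm_sub (adjoint C) B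
  rw [adjoint.norm_map, add_comm (adjoint C), norm_sub_rev] at hC
  rcases abs_cases (‖B + adjoint C‖ - ‖B - adjoint C‖) with ⟨h, -⟩ | ⟨h, -⟩ <;>
    rcases max_cases ‖B‖ ‖C‖ with ⟨hmax, -⟩ | ⟨hmax, -⟩ <;>
    rw [h, hmax] <;> linarith
end

section
/- Let x, y, e be elements of a complex Hilbert space H with ‖e‖ = 1, and let 0 ≤ α ≤ 1. Then |⟨x, e⟩·⟨e, y⟩|² ≤ ((1+α)/4)·‖x‖²·‖y‖² + ((1−α)/4)·|⟨x, y⟩|² + (1/2)·‖x‖·‖y‖·|⟨x, y⟩|. -/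
/-! Buzano's inequality `|⟪x, e⟫⟪e, y⟫| ≤ (‖x‖‖y‖ + |⟪x, y⟫|) / 2` comes from writing
`2⟪x, e⟫⟪e, y⟫ = ⟪x, y⟫ + ⟪x, R y⟫`, where `R` is the reflection in the line `𝕜 ∙ e`, an isometry.
Squaring it gives the bound at `α = 0`; the bound for `α ≥ 0` adds `α (‖x‖²‖y‖² - |⟪x, y⟫|²) / 4`,
which is nonnegative by Cauchy–Schwarz. -/

open scoped InnerProductSpace

section Buzano

variable {𝕜 E : Type*} [RCLike 𝕜] [NormedAddCommGroup E] [InnerProductSpace 𝕜 E]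

theorem two_mul_inner_mul_inner_eq_add_inner_reflection {e : E} (he : ‖e‖ = 1) (x y : E) :
    2 * (⟪x, e⟫_𝕜 * ⟪e, y⟫_𝕜) = ⟪x, y⟫_𝕜 + ⟪x, (𝕜 ∙ e).reflection y⟫_𝕜 := by
  rw [Submodule.reflection_apply, Submodule.starProjection_unit_singleton 𝕜 he, inner_sub_right,
    inner_smul_right_eq_smul, inner_smul_right, nsmul_eq_mul, Nat.cast_ofNat]
  ring

theorem norm_inner_mul_inner_le_of_norm_eq_one {e : E} (he : ‖e‖ = 1) (x y : E) :
    ‖⟪x, e⟫_𝕜 * ⟪e, y⟫_𝕜‖ ≤ (‖x‖ * ‖y‖ + ‖⟪x, y⟫_𝕜‖) / 2 := by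
  have hR : ‖⟪x, (𝕜 ∙ e).reflection y⟫_𝕜‖ ≤ ‖x‖ * ‖y‖ := by
    simpa only [LinearIsometryEquiv.norm_map] using norm_inner_le_norm x ((𝕜 ∙ e).reflection y)
  have h2 : 2 * ‖⟪x, e⟫_𝕜 * ⟪e, y⟫_𝕜‖ ≤ ‖x‖ * ‖y‖ + ‖⟪x, y⟫_𝕜‖ := calc
    2 * ‖⟪x, e⟫_𝕜 * ⟪e, y⟫_𝕜‖ = ‖⟪x, y⟫_𝕜 + ⟪x, (𝕜 ∙ e).reflection y⟫_𝕜‖ := by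
      rw [← two_mul_inner_mul_inner_eq_add_inner_reflection he, norm_mul (2 : 𝕜), RCLike.norm_ofNat]
    _ ≤ ‖⟪x, y⟫_𝕜‖ + ‖⟪x, (𝕜 ∙ e).reflection y⟫_𝕜‖ := norm_add_le _ _
    _ ≤ ‖x‖ * ‖y‖ + ‖⟪x, y⟫_𝕜‖ := by linarith
  linarith

end Buzano

theorem stmt_11_general {H : Type*} [NormedAddCommGroup H] [InnerProductSpace ℂ H]
    (x y e : H) (he : ‖e‖ = 1) (α : ℝ) (hα0 : 0 ≤ α) :
    ‖(inner ℂ x e : ℂ) * (inner ℂ e y : ℂ)‖ ^ 2 ≤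
      ((1 + α) / 4) * (‖x‖ ^ 2 * ‖y‖ ^ 2) + ((1 - α) / 4) * ‖(inner ℂ x y : ℂ)‖ ^ 2 +
        (1 / 2) * (‖x‖ * ‖y‖ * ‖(inner ℂ x y : ℂ)‖) := by
  have hBuzano := norm_inner_mul_inner_le_of_norm_eq_one (𝕜 := ℂ) he x y
  have hCS := norm_inner_le_norm (𝕜 := ℂ) x y
  have hsq : ‖(inner ℂ x e : ℂ) * (inner ℂ e y : ℂ)‖ ^ 2 ≤
      ((‖x‖ * ‖y‖ + ‖(inner ℂ x y : ℂ)‖) / 2) ^ 2 :=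
    pow_le_pow_left₀ (norm_nonneg _) hBuzano 2
  have hgap : 0 ≤ α * ((‖x‖ * ‖y‖) ^ 2 - ‖(inner ℂ x y : ℂ)‖ ^ 2) :=
    mul_nonneg hα0 (sub_nonneg.mpr (pow_le_pow_left₀ (norm_nonneg _) hCS 2))
  nlinarith

theorem stmt_11 {H : Type*} [NormedAddCommGroup H] [InnerProductSpace ℂ H]
    (x y e : H) (he : ‖e‖ = 1) (α : ℝ) (hα0 : 0 ≤ α) (hα1 : α ≤ 1) :
    ‖(inner ℂ x e : ℂ) * (inner ℂ e y : ℂ)‖ ^ 2 ≤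
      ((1 + α) / 4) * (‖x‖ ^ 2 * ‖y‖ ^ 2) + ((1 - α) / 4) * ‖(inner ℂ x y : ℂ)‖ ^ 2 +
        (1 / 2) * (‖x‖ * ‖y‖ * ‖(inner ℂ x y : ℂ)‖) :=
  stmt_11_general x y e he α hα0
end
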